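/- Let X be a complete metric space, S a semigroup acting on X, and suppose the action is strong-orbit k-Lipschitzian. If x ∈ X satisfies r(x) := inf{D(x, o(y)) : y ∈ X} = 0 and some orbit is bounded, then x is a common fixed point: sx = x for all s ∈ S. -/

import Mathlib

open ENNReal NNReal

/-! If `D(x, o(y))` can be made arbitrarily small, then by the triangle inequality through `s y`,
`d(s x, x) ≤ d(s x, s y) + d(s y, x) ≤ (k + 1) · D(x, o(y))`, so `d(s x, x) = 0`. -/

section OrbitEDist

variable {S X : Type*}

/-- The paper's `D(x, o(y))` for the orbit `o(y) = {y} ∪ {t y | t ∈ S}`. -/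
noncomputable def orbitEDist [EDist X] (act : S → X → X) (x y : X) : ℝ≥0∞ :=
  edist x y ⊔ ⨆ t, edist x (act t y)

theorem edist_act_le_orbitEDist [EDist X] (act : S → X → X) (s : S) (x y : X) :
    edist x (act s y) ≤ orbitEDist act x y :=
  le_sup_of_le_right (le_iSup (fun t => edist x (act t y)) s)

theorem edist_act_self_le_orbitEDist [PseudoEMetricSpace X] {act : S → X → X} {s : S}
    {x y : X} {k : ℝ≥0∞} (hlip : edist (act s x) (act s y) ≤ k * orbitEDist act x y) :
    edist (act s x) x ≤ (k + 1) * orbitEDist act x y :=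
  calc edist (act s x) x ≤ edist (act s x) (act s y) + edist x (act s y) :=
        edist_triangle_right _ _ _
    _ ≤ k * orbitEDist act x y + orbitEDist act x y :=
        add_le_add hlip (edist_act_le_orbitEDist act s x y)
    _ = (k + 1) * orbitEDist act x y := by ring

theorem act_eq_self_of_iInf_orbitEDist_eq_zero [EMetricSpace X] {act : S → X → X} {s : S}
    {x : X} {k : ℝ≥0} (hlip : ∀ y, edist (act s x) (act s y) ≤ k * orbitEDist act x y)
    (hr : ⨅ y, orbitEDist act x y = 0) : act s x = x := by
  have hle : edist (act s x) x ≤ ⨅ y, ((k : ℝ≥0∞) + 1) * orbitEDist act x y :=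
    le_iInf fun y => edist_act_self_le_orbitEDist (hlip y)
  rw [← ENNReal.mul_iInf_of_ne (by simp) (by simp), hr, mul_zero] at hle
  exact edist_eq_zero.mp (le_antisymm hle zero_le)

end OrbitEDist

theorem r_eq_zero_implies_common_fixed_point_general
    {S X : Type*} [MetricSpace X]
    (act : S → X → X)
    (k : ℝ≥0)
    (hstrong : ∀ (s : S) (x y : X),
      (edist (act s x) (act s y) ⊔ ⨆ t : S, edist (act s x) (act t (act s y)))
        ≤ (k : ℝ≥0∞) * (edist x y ⊔ ⨆ t : S, edist x (act t y)))
    (x : X)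
    (hr : (⨅ y : X, (edist x y ⊔ ⨆ t : S, edist x (act t y))) = 0) :
    ∀ s : S, act s x = x := fun s =>
  act_eq_self_of_iInf_orbitEDist_eq_zero (fun y => le_sup_left.trans (hstrong s x y)) hr

/-- For a strong-orbit k-Lipschitzian action, a point `x` with `r(x) = 0`
is a common fixed point. -/
theorem r_eq_zero_implies_common_fixed_point
    {S X : Type*} [Semigroup S] [MetricSpace X]
    (act : S → X → X) (hact : ∀ (s t : S) (x : X), act (s * t) x = act s (act t x))
    (k : ℝ≥0)
    (hstrong : ∀ (s : S) (x y : X),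
      (edist (act s x) (act s y) ⊔ ⨆ t : S, edist (act s x) (act t (act s y)))
        ≤ (k : ℝ≥0∞) * (edist x y ⊔ ⨆ t : S, edist x (act t y)))
    (hbdd : ∃ x₀ : X, (⨆ t : S, edist x₀ (act t x₀)) < ⊤)
    (x : X)
    (hr : (⨅ y : X, (edist x y ⊔ ⨆ t : S, edist x (act t y))) = 0) :
    ∀ s : S, act s x = x :=
  r_eq_zero_implies_common_fixed_point_general act k hstrong x hr
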